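/- arXiv:1302.2109 — 4 statements merged into one kernel-verified Lean document; each statement's English description precedes it below -/
import Mathlib

section
/- Suppose x(t) solves ẋ^α = −m^{αβ}(t)∂U_μ/∂x^β(x) − v^α(t) where the symmetric positive definite matrices M(t) = (m_{αβ}(t)) satisfy c₁I ⪯ M(t) ⪯ c₂I for constants c₁, c₂ > 0, v(t) → 0 as t → ∞, and U_μ: ℝ^r → ℝ is C¹ with a unique critical point x_e which is a minimum, and satisfies: (A6) inf_{‖x−x_e‖≥δ₁} U_μ(x) > U_μ(x_e) for some δ₁ > 0, and (A7) inf_{‖x−x_e‖≥δ₂} ‖dU_μ(x)‖ > 0 for some δ₂ > 0. Then x(t) → x_e as t → ∞. -/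
open Matrix Filter

private lemma psd_dot' {r : ℕ} {A : Matrix (Fin r) (Fin r) ℝ} (hA : A.PosSemidef) (z : Fin r → ℝ) :
    0 ≤ z ⬝ᵥ (A *ᵥ z) := by simpa using hA.re_dotProduct_nonneg z

private lemma quad_bound' {r : ℕ} {A : Matrix (Fin r) (Fin r) ℝ} (hA : A.PosDef)
    {c₂ : ℝ} (hc₂ : 0 < c₂) (hhi : ((c₂ • (1 : Matrix (Fin r) (Fin r) ℝ)) - A).PosSemidef)
    (g : Fin r → ℝ) : (g ⬝ᵥ g) / c₂ ≤ g ⬝ᵥ (A⁻¹ *ᵥ g) := by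
  have hsym : Aᵀ = A := by
    have h := hA.isHermitian
    rwa [Matrix.IsHermitian, Matrix.conjTranspose_eq_transpose_of_trivial] at h
  set y := A⁻¹ *ᵥ g with hy
  have hAy : A *ᵥ y = g := by
    rw [hy, Matrix.mulVec_mulVec,
      Matrix.mul_nonsing_inv _ (Matrix.isUnit_iff_isUnit_det _ |>.1 hA.isUnit),
      Matrix.one_mulVec]
  have hform : ∀ u w : Fin r → ℝ, u ⬝ᵥ (A *ᵥ w) = w ⬝ᵥ (A *ᵥ u) := by
    intro u w
    rw [Matrix.dotProduct_mulVec, ← Matrix.mulVec_transpose, hsym, dotProduct_comm]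
  have hpsd := fun z => psd_dot' hA.posSemidef z
  set Q : ℝ := y ⬝ᵥ (A *ᵥ y) with hQ
  set C : ℝ := g ⬝ᵥ (A *ᵥ g) with hC
  set p : ℝ := g ⬝ᵥ g with hp
  have hB : g ⬝ᵥ (A *ᵥ y) = p := by rw [hAy]
  have hq : ∀ s : ℝ, 0 ≤ Q * (s * s) + (2 * p) * s + C := by
    intro s
    have h0 := hpsd (s • y + g)
    simp only [Matrix.mulVec_add, Matrix.mulVec_smul, add_dotProduct,
      smul_dotProduct, dotProduct_add, dotProduct_smul, smul_eq_mul] at h0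
    have hs : y ⬝ᵥ (A *ᵥ g) = p := by rw [hform, hB]
    rw [hs, hB, ← hQ, ← hC] at h0
    nlinarith [h0]
  have hd := discrim_le_zero hq
  rw [discrim] at hd
  have hub : C ≤ c₂ * p := by
    have h0 := psd_dot' hhi g
    simp only [Matrix.sub_mulVec, Matrix.smul_mulVec, Matrix.one_mulVec,
      dotProduct_sub, dotProduct_smul, smul_eq_mul] at h0
    rw [← hC, ← hp] at h0
    linarith
  have hQa : Q = g ⬝ᵥ y := by rw [hQ, hAy, dotProduct_comm]
  have hp0 : 0 ≤ p := Finset.sum_nonneg fun i _ => mul_self_nonneg _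
  have hQ0 : 0 ≤ Q := hpsd y
  rw [hQa] at hQ0 hd
  show p / c₂ ≤ g ⬝ᵥ y
  rcases eq_or_lt_of_le hp0 with h | h
  · rw [← h]; simpa using hQ0
  · rw [div_le_iff₀ hc₂]
    nlinarith [hd, hub, hQ0, h]

private lemma deriv_decrease' {V d : ℝ → ℝ} (hVd : ∀ t, HasDerivAt V (d t) t) {k a b : ℝ}
    (hab : a ≤ b) (hd : ∀ u ∈ Set.Icc a b, d u ≤ -k) : V b ≤ V a - k * (b - a) := by
  have hW : ∀ t, HasDerivAt (fun u => V u + k * u) (d t + k) t := by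
    intro t
    have h := (hVd t).add ((hasDerivAt_id t).const_mul k)
    rw [mul_one] at h
    exact h
  have hA : AntitoneOn (fun u => V u + k * u) (Set.Icc a b) :=
    antitoneOn_of_deriv_nonpos (convex_Icc a b)
      (fun t _ => (hW t).continuousAt.continuousWithinAt)
      (fun t _ => (hW t).differentiableAt.differentiableWithinAt)
      (fun t ht => by
        rw [(hW t).deriv]
        have := hd t (interior_subset ht)
        linarith)
  have h := hA (Set.left_mem_Icc.2 hab) (Set.right_mem_Icc.2 hab) hab
  simp only at h
  linarith

/-- Abstract damping-induced self-recovery (Theorem 2.3):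
solutions of ẋ = −M(t)⁻¹ ∇U_μ(x) − v(t) converge to the unique critical point. -/
theorem stmt_4 (r : ℕ) (c₁ c₂ : ℝ) (hc₁ : 0 < c₁) (hc₂ : 0 < c₂)
    (M : ℝ → Matrix (Fin r) (Fin r) ℝ)
    (hMsym : ∀ t, (M t).IsHermitian)
    (hMpd : ∀ t, (M t).PosDef)
    (hMlo : ∀ t, (M t - c₁ • (1 : Matrix (Fin r) (Fin r) ℝ)).PosSemidef)
    (hMhi : ∀ t, ((c₂ • (1 : Matrix (Fin r) (Fin r) ℝ)) - M t).PosSemidef)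
    (v : ℝ → EuclideanSpace ℝ (Fin r))
    (hv : Filter.Tendsto v Filter.atTop (nhds 0))
    (U : EuclideanSpace ℝ (Fin r) → ℝ) (hU : ContDiff ℝ 1 U)
    (xe : EuclideanSpace ℝ (Fin r))
    -- A5: unique critical point, which is a minimum
    (hcrit : ∀ z, gradient U z = 0 ↔ z = xe)
    (hmin : ∀ z, U xe ≤ U z)
    -- A6
    (hA6 : ∃ δ₁ > 0, ∃ c, U xe < c ∧ ∀ z, δ₁ ≤ ‖z - xe‖ → c ≤ U z)
    -- A7
    (hA7 : ∃ δ₂ > 0, ∃ c > 0, ∀ z, δ₂ ≤ ‖z - xe‖ → c ≤ ‖gradient U z‖)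
    (x : ℝ → EuclideanSpace ℝ (Fin r))
    (hode : ∀ α t, HasDerivAt (fun s => x s α)
      (-(∑ β, (M t)⁻¹ α β * gradient U (x t) β) - v t α) t) :
    Filter.Tendsto x Filter.atTop (nhds xe) := by
  -- trivial case r = 0
  rcases Nat.eq_zero_or_pos r with hr0 | hr
  · subst hr0
    have hxx : x = fun _ => xe := funext fun t => PiLp.ext fun i => i.elim0
    rw [hxx]
    exact tendsto_const_nhds
  -- continuity facts
  have hUc : Continuous U := hU.continuous
  have hgc : Continuous (fun z => gradient U z) := by
    have h1 : Continuous (fderiv ℝ U) := hU.continuous_fderiv one_ne_zero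
    exact (InnerProductSpace.toDual ℝ (EuclideanSpace ℝ (Fin r))).symm.continuous.comp h1
  -- compact annuli
  have hann : ∀ ε δ : ℝ, 0 < ε → ε ≤ δ →
      ∃ K : Set (EuclideanSpace ℝ (Fin r)), IsCompact K ∧ K.Nonempty ∧ xe ∉ K ∧
        (∀ z ∈ K, ε ≤ ‖z - xe‖) ∧ ∀ z, ε ≤ ‖z - xe‖ → ‖z - xe‖ ≤ δ → z ∈ K := by
    intro ε δ hε hεδ
    refine ⟨Metric.closedBall xe δ ∩ {z | ε ≤ ‖z - xe‖}, ?_, ?_, ?_, ?_, ?_⟩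
    · exact (isCompact_closedBall xe δ).inter_right
        (isClosed_le continuous_const ((continuous_id.sub continuous_const).norm))
    · refine ⟨xe + ε • EuclideanSpace.single (⟨0, hr⟩ : Fin r) (1:ℝ), ?_, ?_⟩
      · rw [Metric.mem_closedBall, dist_eq_norm, add_sub_cancel_left, norm_smul,
          EuclideanSpace.norm_single]
        simpa [abs_of_pos hε] using hεδ
      · show ε ≤ ‖_‖
        rw [add_sub_cancel_left, norm_smul, EuclideanSpace.norm_single]
        simp [abs_of_pos hε]
    · intro ⟨_, h2⟩
      simp only [Set.mem_setOf_eq, sub_self, norm_zero] at h2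
      linarith
    · exact fun z hz => hz.2
    · intro z h1 h2
      exact ⟨Metric.mem_closedBall.2 (by rwa [dist_eq_norm]), h1⟩
  -- a global minimizer must be xe
  have hglob : ∀ z, U z = U xe → z = xe := by
    intro z hz
    have hloc : IsLocalMin U z := Filter.Eventually.of_forall fun w => hz ▸ hmin w
    have h0 : gradient U z = 0 := by
      have := hloc.fderiv_eq_zero
      simp [gradient, this]
    exact (hcrit z).1 h0
  -- strengthened A6
  have hA6' : ∀ ε > 0, ∃ c, U xe < c ∧ ∀ z, ε ≤ ‖z - xe‖ → c ≤ U z := by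
    intro ε hε
    obtain ⟨δ₁, hδ₁, c, hc, hc'⟩ := hA6
    rcases le_or_gt δ₁ ε with h | h
    · exact ⟨c, hc, fun z hz => hc' z (h.trans hz)⟩
    obtain ⟨K, hKc, hKne, hKxe, hKlb, hKmem⟩ := hann ε δ₁ hε h.le
    obtain ⟨z₁, hz₁K, hz₁min⟩ := hKc.exists_isMinOn hKne hUc.continuousOn
    have hz₁ : U xe < U z₁ := by
      rcases (hmin z₁).lt_or_eq with h' | h'
      · exact h'
      · exact absurd (hglob z₁ h'.symm) (fun he => hKxe (he ▸ hz₁K))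
    refine ⟨min c (U z₁), lt_min hc hz₁, fun z hz => ?_⟩
    rcases le_or_gt ‖z - xe‖ δ₁ with h2 | h2
    · exact (min_le_right _ _).trans (hz₁min (hKmem z hz h2))
    · exact (min_le_left _ _).trans (hc' z h2.le)
  -- strengthened A7
  have hA7' : ∀ ε > 0, ∃ c > 0, ∀ z, ε ≤ ‖z - xe‖ → c ≤ ‖gradient U z‖ := by
    intro ε hε
    obtain ⟨δ₂, hδ₂, c, hcpos, hc'⟩ := hA7
    rcases le_or_gt δ₂ ε with h | h
    · exact ⟨c, hcpos, fun z hz => hc' z (h.trans hz)⟩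
    obtain ⟨K, hKc, hKne, hKxe, hKlb, hKmem⟩ := hann ε δ₂ hε h.le
    obtain ⟨z₁, hz₁K, hz₁min⟩ := hKc.exists_isMinOn hKne (hgc.norm.continuousOn)
    have hz₁ : 0 < ‖gradient U z₁‖ := by
      rw [norm_pos_iff]
      intro h0
      exact hKxe (((hcrit z₁).1 h0) ▸ hz₁K)
    refine ⟨min c ‖gradient U z₁‖, lt_min hcpos hz₁, fun z hz => ?_⟩
    rcases le_or_gt ‖z - xe‖ δ₂ with h2 | h2
    · exact (min_le_right _ _).trans (hz₁min (hKmem z hz h2))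
    · exact (min_le_left _ _).trans (hc' z h2.le)
  -- the time-derivative of the Lyapunov function V = U ∘ x
  set d : ℝ → ℝ := fun t =>
    -((fun β => gradient U (x t) β) ⬝ᵥ ((M t)⁻¹ *ᵥ (fun β => gradient U (x t) β)))
      - (inner ℝ (gradient U (x t)) (v t) : ℝ) with hddef
  set xd : ℝ → EuclideanSpace ℝ (Fin r) := fun t =>
    WithLp.toLp 2 (fun α => -(((M t)⁻¹ *ᵥ (fun β => gradient U (x t) β)) α) - v t α : Fin r → ℝ) with hxddef
  have hx' : ∀ t, HasDerivAt x (xd t) t := by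
    intro t
    have hp : HasDerivAt (fun s => (fun α => x s α : Fin r → ℝ))
        (fun α => -(((M t)⁻¹ *ᵥ (fun β => gradient U (x t) β)) α) - v t α) t :=
      hasDerivAt_pi.2 (fun α => hode α t)
    exact ((EuclideanSpace.equiv (Fin r) ℝ).symm.toContinuousLinearMap.hasFDerivAt.comp_hasDerivAt
      t hp : )
  have hxc : Continuous x := continuous_iff_continuousAt.2 fun t => (hx' t).continuousAt
  have hVc : Continuous (fun t => U (x t)) := hUc.comp hxc
  have hVd : ∀ t, HasDerivAt (fun s => U (x s)) (d t) t := by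
    intro t
    have hUd : HasFDerivAt U (fderiv ℝ U (x t)) (x t) := ((hU.differentiable one_ne_zero) (x t)).hasFDerivAt
    have h1 := hUd.comp_hasDerivAt t (hx' t)
    have h2 : fderiv ℝ U (x t) = InnerProductSpace.toDual ℝ _ (gradient U (x t)) := by
      simp [gradient]
    rw [h2, InnerProductSpace.toDual_apply_apply] at h1
    refine h1.congr_deriv ?_
    symm
    rw [hddef, hxddef]
    simp only [PiLp.inner_apply, RCLike.inner_apply, starRingEnd_apply, star_trivial, dotProduct]
    rw [← Finset.sum_neg_distrib, ← Finset.sum_sub_distrib]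
    exact Finset.sum_congr rfl fun i _ => by ring
  -- norm identity
  have hGn : ∀ t : ℝ,
      ((fun β => gradient U (x t) β) ⬝ᵥ (fun β => gradient U (x t) β)) = ‖gradient U (x t)‖^2 := by
    intro t
    rw [← real_inner_self_eq_norm_sq]
    simp only [PiLp.inner_apply, dotProduct]
    exact Finset.sum_congr rfl fun i _ => by simp [pow_two]
  -- derivative estimate
  have hdle : ∀ (t : ℝ) (c' : ℝ), 0 < c' → c' ≤ ‖gradient U (x t)‖ →
      ‖v t‖ ≤ c' / (2 * c₂) → d t ≤ -(c' ^ 2 / (2 * c₂)) := by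
    intro t c' hc' hG hvs
    have hq := quad_bound' (hMpd t) hc₂ (hMhi t) (fun β => gradient U (x t) β)
    rw [hGn t] at hq
    have hiv : |(inner ℝ (gradient U (x t)) (v t) : ℝ)| ≤ ‖gradient U (x t)‖ * ‖v t‖ :=
      abs_real_inner_le_norm _ _
    set n := ‖gradient U (x t)‖ with hn
    have hn0 : (0 : ℝ) ≤ n := norm_nonneg _
    have hv0 : (0 : ℝ) ≤ ‖v t‖ := norm_nonneg _
    have h1 : d t ≤ -(n ^ 2 / c₂) + n * (c' / (2 * c₂)) := by
      rw [hddef]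
      have h3 : n * ‖v t‖ ≤ n * (c' / (2 * c₂)) := mul_le_mul_of_nonneg_left hvs hn0
      have h4 := abs_le.1 hiv
      simp only
      linarith [hq, h4.1, h4.2, h3]
    have heq : -(n ^ 2 / c₂) + n * (c' / (2 * c₂)) + c' ^ 2 / (2 * c₂)
        = (-(2 * n ^ 2) + n * c' + c' ^ 2) / (2 * c₂) := by
      field_simp
    have hkey : -(2 * n ^ 2) + n * c' + c' ^ 2 ≤ 0 := by nlinarith
    have h5 : (-(2 * n ^ 2) + n * c' + c' ^ 2) / (2 * c₂) ≤ 0 :=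
      div_nonpos_of_nonpos_of_nonneg hkey (by positivity)
    linarith [heq ▸ h5]
  -- lower bound for V
  have hVlb : ∀ t, U xe ≤ U (x t) := fun t => hmin (x t)
  -- final convergence
  rw [Metric.tendsto_atTop]
  intro ε hε
  obtain ⟨cε, hcε, hcε'⟩ := hA6' ε hε
  -- small ball where U < cε
  obtain ⟨η, hη, hηU⟩ := Metric.continuousAt_iff.1 hUc.continuousAt (cε - U xe) (by linarith)
  set ρ := η / 2 with hρdef
  have hρ : 0 < ρ := by positivity
  have hρU : ∀ z : EuclideanSpace ℝ (Fin r), ‖z - xe‖ ≤ ρ → U z < cε := by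
    intro z hz
    have : dist z xe < η := by rw [dist_eq_norm]; linarith
    have := hηU this
    rw [Real.dist_eq] at this
    have := (abs_lt.1 this).2
    linarith
  obtain ⟨c', hc'pos, hc''⟩ := hA7' ρ hρ
  set k := c' ^ 2 / (2 * c₂) with hkdef
  have hk : 0 < k := by positivity
  -- eventually ‖v‖ small
  obtain ⟨T₀, hT₀⟩ := Metric.tendsto_atTop.1 hv (c' / (2 * c₂)) (by positivity)
  have hvsmall : ∀ t, T₀ ≤ t → ‖v t‖ ≤ c' / (2 * c₂) := by
    intro t ht
    have := hT₀ t ht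
    rw [dist_zero_right] at this
    exact this.le
  -- derivative is ≤ -k whenever far from xe and t ≥ T₀
  have hdneg : ∀ t, T₀ ≤ t → ρ ≤ ‖x t - xe‖ → d t ≤ -k := by
    intro t ht hx
    exact hdle t c' hc'pos (hc'' (x t) hx) (hvsmall t ht)
  -- the trajectory returns near xe
  have hreturn : ∀ T, T₀ ≤ T → ∃ t, T ≤ t ∧ ‖x t - xe‖ < ρ := by
    intro T hT
    by_contra h
    push_neg at h
    set b := T + ((U (x T) - U xe) / k + 1) with hbdef
    have hb : T ≤ b := by
      have h1 : 0 ≤ (U (x T) - U xe) / k := div_nonneg (by linarith [hVlb T]) hk.le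
      rw [hbdef]; linarith
    have hdec := deriv_decrease' hVd hb (fun u hu => hdneg u (hT.trans hu.1) (h u hu.1))
    have hcomp : k * ((U (x T) - U xe) / k + 1) = (U (x T) - U xe) + k := by
      field_simp
    have : U (x b) ≤ U xe - k := by
      rw [hbdef] at hdec
      rw [show T + ((U (x T) - U xe) / k + 1) - T = (U (x T) - U xe) / k + 1 by ring] at hdec
      rw [hcomp] at hdec
      linarith
    linarith [hVlb b]
  obtain ⟨t₁, ht₁T₀, ht₁ρ⟩ := hreturn T₀ le_rfl
  -- trapping: for all t ≥ t₁, U (x t) < cε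
  have htrap : ∀ t, t₁ ≤ t → U (x t) < cε := by
    by_contra h
    push_neg at h
    obtain ⟨t₂, ht₂, hUt₂⟩ := h
    set S := {t : ℝ | t₁ ≤ t ∧ cε ≤ U (x t)} with hSdef
    have hSne : S.Nonempty := ⟨t₂, ht₂, hUt₂⟩
    have hSbdd : BddBelow S := ⟨t₁, fun u hu => hu.1⟩
    have hSclosed : IsClosed S :=
      (isClosed_le continuous_const continuous_id).inter (isClosed_le continuous_const hVc)
    set s := sInf S with hsdef
    have hsS : s ∈ S := hSclosed.csInf_mem hSne hSbdd
    have hst₁ : t₁ < s := by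
      rcases hsS.1.lt_or_eq with h' | h'
      · exact h'
      · exfalso
        have : U (x t₁) < cε := hρU (x t₁) ht₁ρ.le
        rw [← h'] at hsS
        linarith [hsS.2]
    have hxs : ρ < ‖x s - xe‖ := by
      by_contra h'
      push_neg at h'
      exact absurd (hρU (x s) h') (not_lt.2 hsS.2)
    -- continuity gives a left neighborhood where the trajectory stays away
    have hcont : ContinuousAt (fun u => ‖x u - xe‖) s :=
      ((hxc.sub continuous_const).norm).continuousAt
    have hev : ∀ᶠ u in nhds s, ρ < ‖x u - xe‖ := hcont (Ioi_mem_nhds hxs)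
    obtain ⟨hdt, hhdt, hnear⟩ := Metric.eventually_nhds_iff.1 hev
    set t' := max ((t₁ + s) / 2) (s - hdt / 2) with ht'def
    have ht'lt : t' < s := by
      apply max_lt
      · linarith
      · linarith
    have ht't₁ : t₁ ≤ t' := le_trans (by linarith) (le_max_left _ _)
    have hfar : ∀ u, u ∈ Set.Icc t' s → ρ ≤ ‖x u - xe‖ := by
      intro u hu
      have h1 : s - hdt / 2 ≤ u := le_trans (le_max_right _ _) hu.1
      have h2 : dist u s < hdt := by
        rw [Real.dist_eq, abs_lt]
        constructor <;> [linarith [hu.2]; linarith [hu.2]]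
      exact (hnear h2).le
    have hdec := deriv_decrease' hVd ht'lt.le
      (fun u hu => hdneg u (le_trans ht₁T₀ (le_trans ht't₁ hu.1)) (hfar u hu))
    have hVt' : U (x t') < cε := by
      by_contra h'
      push_neg at h'
      have ht'S : t' ∈ S := ⟨ht't₁, h'⟩
      have : s ≤ t' := csInf_le hSbdd ht'S
      linarith
    have : U (x s) < cε := by
      have hks : 0 < k * (s - t') := mul_pos hk (by linarith)
      linarith
    linarith [hsS.2]
  refine ⟨t₁, fun t ht => ?_⟩
  rw [dist_eq_norm]
  by_contra h'
  push_neg at h'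
  exact absurd (hcε' (x t) h') (not_le.2 (htrap t ht))
end

section
/- Under the hypotheses of the self-recovery theorem, if additionally the initial conditions satisfy ẋ(0) = 0 and ẏ(0) = 0, then the momentum constants are μ_α = h_α(x(0)), so x(0) is a critical point of U_μ; hence by uniqueness of the critical point, x(t) → x(0) as t → ∞. -/
attribute [local instance] Matrix.normedAddCommGroup

open Matrix Filter
open scoped RealInnerProductSpace

/-- identity map into Euclidean space, to pin the ℓ² norm/inner instances -/
def toE {r : ℕ} (v : Fin r → ℝ) : EuclideanSpace ℝ (Fin r) := WithLp.toLp 2 v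

@[simp] lemma toE_apply {r : ℕ} (v : Fin r → ℝ) (i : Fin r) : toE v i = v i := rfl

section helpers

variable {r n : ℕ}

lemma herm_transpose {A : Matrix (Fin r) (Fin r) ℝ} (hA : A.IsHermitian) : Aᵀ = A := by
  have := hA.eq
  simpa [Matrix.conjTranspose_eq_transpose_of_trivial] using this

lemma symm_dot {A : Matrix (Fin r) (Fin r) ℝ} (hA : A.IsHermitian)
    (w u : Fin r → ℝ) : (A *ᵥ w) ⬝ᵥ u = w ⬝ᵥ (A *ᵥ u) := by
  rw [dotProduct_mulVec w A u]
  congr 1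
  rw [← vecMul_transpose, herm_transpose hA]

lemma euclid_inner_dot (u v : EuclideanSpace ℝ (Fin r)) : ⟪u, v⟫ = (u : Fin r → ℝ) ⬝ᵥ v := by
  change (v : Fin r → ℝ) ⬝ᵥ star (u : Fin r → ℝ) = _
  rw [star_trivial, dotProduct_comm]

lemma euclid_norm_sq (u : EuclideanSpace ℝ (Fin r)) : ‖u‖ ^ 2 = (u : Fin r → ℝ) ⬝ᵥ u := by
  rw [← real_inner_self_eq_norm_sq]; exact euclid_inner_dot u u

lemma euclid_dot_le (u v : EuclideanSpace ℝ (Fin r)) :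
    (u : Fin r → ℝ) ⬝ᵥ v ≤ ‖u‖ * ‖v‖ := by
  rw [← euclid_inner_dot]; exact real_inner_le_norm u v

lemma euclid_coord_le (u : EuclideanSpace ℝ (Fin r)) (i : Fin r) : |u i| ≤ ‖u‖ := by
  have h := EuclideanSpace.norm_eq u
  have h2 : |u i| ^ 2 ≤ ∑ j, ‖u j‖ ^ 2 := by
    have : ‖u i‖ ^ 2 ≤ ∑ j, ‖u j‖ ^ 2 :=
      Finset.single_le_sum (f := fun j => ‖u j‖ ^ 2) (fun j _ => sq_nonneg _) (Finset.mem_univ i)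
    simpa [Real.norm_eq_abs] using this
  have := Real.sqrt_le_sqrt h2
  rwa [Real.sqrt_sq (abs_nonneg _), ← h] at this

open scoped MatrixOrder in
lemma qf_upper {A : Matrix (Fin r) (Fin r) ℝ} {c₂ : ℝ} (hA : A.PosSemidef)
    (hhi : ((c₂ • (1 : Matrix (Fin r) (Fin r) ℝ)) - A).PosSemidef) (w : Fin r → ℝ) :
    (A *ᵥ w) ⬝ᵥ (A *ᵥ w) ≤ c₂ * (w ⬝ᵥ (A *ᵥ w)) := by
  have hherm := hA.1
  obtain ⟨s, hsH, hss, hpsd⟩ : ∃ s : Matrix (Fin r) (Fin r) ℝ, s.IsHermitian ∧ s * s = A ∧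
      (s * ((c₂ • (1 : Matrix (Fin r) (Fin r) ℝ)) - A) * s).PosSemidef :=
    ⟨CFC.sqrt A, (CFC.sqrt_nonneg A).posSemidef.1, CFC.sqrt_mul_sqrt_self A hA.nonneg, by
      have h := hhi.mul_mul_conjTranspose_same (CFC.sqrt A)
      rwa [(CFC.sqrt_nonneg A).posSemidef.1] at h⟩
  subst hss
  have key : s * ((c₂ • (1 : Matrix (Fin r) (Fin r) ℝ)) - s * s) * s
      = c₂ • (s * s) - (s * s) * (s * s) := by
    rw [Matrix.mul_sub, Matrix.sub_mul, Matrix.mul_smul, Matrix.mul_one, Matrix.smul_mul]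
    noncomm_ring
  rw [key] at hpsd
  have h2 := hpsd.dotProduct_mulVec_nonneg w
  simp only [star_trivial, Matrix.sub_mulVec, Matrix.smul_mulVec, dotProduct_sub,
    dotProduct_smul, smul_eq_mul] at h2
  have h3 : w ⬝ᵥ (((s * s) * (s * s)) *ᵥ w) = ((s * s) *ᵥ w) ⬝ᵥ ((s * s) *ᵥ w) := by
    rw [← Matrix.mulVec_mulVec, ← symm_dot hherm]
  linarith

lemma inv_mulVec_norm_le {A : Matrix (Fin r) (Fin r) ℝ} {c₁ : ℝ} (hc₁ : 0 < c₁)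
    (hA : A.PosDef) (hlo : (A - c₁ • (1 : Matrix (Fin r) (Fin r) ℝ)).PosSemidef)
    (v : Fin r → ℝ) :
    ‖toE (A⁻¹ *ᵥ v)‖ ≤ ‖toE v‖ / c₁ := by
  have hAv : A *ᵥ (A⁻¹ *ᵥ v) = v := by
    rw [Matrix.mulVec_mulVec, Matrix.mul_nonsing_inv _ (isUnit_iff_isUnit_det _ |>.1 hA.isUnit),
      Matrix.one_mulVec]
  have h1 := hlo.dotProduct_mulVec_nonneg (A⁻¹ *ᵥ v)
  simp only [star_trivial, Matrix.sub_mulVec, Matrix.smul_mulVec, dotProduct_sub,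
    dotProduct_smul, smul_eq_mul, Matrix.one_mulVec] at h1
  have h2 : (A⁻¹ *ᵥ v) ⬝ᵥ (A *ᵥ (A⁻¹ *ᵥ v)) ≤ ‖toE (A⁻¹ *ᵥ v)‖ * ‖toE v‖ := by
    rw [hAv]; exact euclid_dot_le (toE (A⁻¹ *ᵥ v)) (toE v)
  have h3 : c₁ * ‖toE (A⁻¹ *ᵥ v)‖ ^ 2 ≤ ‖toE (A⁻¹ *ᵥ v)‖ * ‖toE v‖ := by
    have h4 : ‖toE (A⁻¹ *ᵥ v)‖ ^ 2 = (A⁻¹ *ᵥ v) ⬝ᵥ (A⁻¹ *ᵥ v) := euclid_norm_sq _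
    rw [h4]
    linarith [h1, h2]
  have hqn : 0 ≤ ‖toE (A⁻¹ *ᵥ v)‖ := norm_nonneg _
  rw [le_div_iff₀ hc₁]
  by_contra hcon
  push_neg at hcon
  rcases eq_or_lt_of_le hqn with hq0 | hq0
  · rw [← hq0, zero_mul] at hcon
    exact absurd hcon (not_lt.2 (norm_nonneg _))
  · have h5 := mul_lt_mul_of_pos_right hcon hq0
    nlinarith [h3]

lemma qf_inv_lower {A : Matrix (Fin r) (Fin r) ℝ} {c₂ : ℝ} (hc₂ : 0 < c₂)
    (hA : A.PosDef) (hhi : ((c₂ • (1 : Matrix (Fin r) (Fin r) ℝ)) - A).PosSemidef)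
    (u : EuclideanSpace ℝ (Fin r)) :
    ‖u‖ ^ 2 / c₂ ≤ (u : Fin r → ℝ) ⬝ᵥ (A⁻¹ *ᵥ u) := by
  have hAv : A *ᵥ (A⁻¹ *ᵥ (u : Fin r → ℝ)) = u := by
    rw [Matrix.mulVec_mulVec, Matrix.mul_nonsing_inv _ (isUnit_iff_isUnit_det _ |>.1 hA.isUnit),
      Matrix.one_mulVec]
  have h1 := qf_upper hA.posSemidef hhi (A⁻¹ *ᵥ (u : Fin r → ℝ))
  rw [hAv] at h1
  have h2 : (A⁻¹ *ᵥ (u : Fin r → ℝ)) ⬝ᵥ (u : Fin r → ℝ)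
      = (u : Fin r → ℝ) ⬝ᵥ (A⁻¹ *ᵥ (u : Fin r → ℝ)) := dotProduct_comm _ _
  rw [h2] at h1
  rw [div_le_iff₀ hc₂, euclid_norm_sq]
  linarith

lemma rect_mulVec_norm_le {mm : Matrix (Fin r) (Fin n) ℝ} {c₃ : ℝ} (hc₃ : 0 ≤ c₃)
    (hmc : ‖mm‖ ≤ c₃) (v : EuclideanSpace ℝ (Fin n)) :
    ‖toE (mm *ᵥ (v : Fin n → ℝ))‖ ≤ (r * n * c₃) * ‖v‖ := by
  have hcoord : ∀ β, |(mm *ᵥ (v : Fin n → ℝ)) β| ≤ n * (c₃ * ‖v‖) := by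
    intro β
    calc |∑ a, mm β a * v a| ≤ ∑ a, |mm β a * v a| := Finset.abs_sum_le_sum_abs _ _
      _ ≤ ∑ _a : Fin n, c₃ * ‖v‖ := by
          apply Finset.sum_le_sum
          intro a _
          rw [abs_mul]
          have e1 : |mm β a| ≤ c₃ := by
            have h9 := mm.norm_entry_le_entrywise_sup_norm (i := β) (j := a)
            rw [Real.norm_eq_abs] at h9
            exact h9.trans hmc
          exact _root_.mul_le_mul e1 (euclid_coord_le v a) (abs_nonneg _) hc₃
      _ = n * (c₃ * ‖v‖) := by simp [Finset.sum_const, mul_comm]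
  have hsq : ‖toE (mm *ᵥ (v : Fin n → ℝ))‖ ^ 2 ≤ ((r : ℝ) * n * c₃ * ‖v‖) ^ 2 := by
    rw [euclid_norm_sq]
    have : ∀ β, (mm *ᵥ (v : Fin n → ℝ)) β * (mm *ᵥ (v : Fin n → ℝ)) β
        ≤ (n * (c₃ * ‖v‖)) ^ 2 := by
      intro β
      have h := hcoord β
      have h2 : 0 ≤ (n : ℝ) * (c₃ * ‖v‖) := by positivity
      nlinarith [abs_nonneg ((mm *ᵥ (v : Fin n → ℝ)) β), sq_abs ((mm *ᵥ (v : Fin n → ℝ)) β)]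
    calc (toE (mm *ᵥ (v : Fin n → ℝ)) : Fin r → ℝ) ⬝ᵥ (mm *ᵥ (v : Fin n → ℝ))
        = ∑ β, (mm *ᵥ (v : Fin n → ℝ)) β * (mm *ᵥ (v : Fin n → ℝ)) β := rfl
      _ ≤ ∑ _β : Fin r, ((n : ℝ) * (c₃ * ‖v‖)) ^ 2 := Finset.sum_le_sum fun β _ => this β
      _ = r * ((n : ℝ) * (c₃ * ‖v‖)) ^ 2 := by simp [Finset.sum_const, mul_comm]
      _ ≤ ((r : ℝ) * n * c₃ * ‖v‖) ^ 2 := by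
          have hr : (r : ℝ) ≤ (r : ℝ) ^ 2 := by
            rcases Nat.eq_zero_or_pos r with h0 | h0
            · simp [h0]
            · have : (1 : ℝ) ≤ r := by exact_mod_cast h0
              nlinarith
          nlinarith [sq_nonneg ((n : ℝ) * (c₃ * ‖v‖)), (Nat.cast_nonneg r : (0:ℝ) ≤ r)]
  have hrhs : 0 ≤ (r : ℝ) * n * c₃ * ‖v‖ := by positivity
  nlinarith [norm_nonneg (toE (mm *ᵥ (v : Fin n → ℝ)))]

lemma barrier {f f' : ℝ → ℝ} (hf : ∀ t, HasDerivAt f (f' t) t) {T η ρ : ℝ} (hρ : 0 < ρ)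
    (H : ∀ t, T ≤ t → η ≤ f t → f' t ≤ -ρ) : ∀ᶠ t in atTop, f t ≤ η := by
  have hcont : Continuous f := by
    rw [continuous_iff_continuousAt]; exact fun t => (hf t).continuousAt
  have hdiff : Differentiable ℝ f := fun t => (hf t).differentiableAt
  have stay : ∀ s, T ≤ s → f s ≤ η → ∀ t, s ≤ t → f t ≤ η := by
    intro s hTs hfs t hst
    by_contra hlt
    push_neg at hlt
    set S : Set ℝ := {u | u ∈ Set.Icc s t ∧ f u ≤ η} with hS
    have hSc : IsClosed S := (isClosed_Icc.inter (isClosed_le hcont continuous_const))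
    have hScpt : IsCompact S :=
      (isCompact_Icc (a := s) (b := t)).of_isClosed_subset hSc (fun u hu => hu.1)
    have hSne : S.Nonempty := ⟨s, ⟨le_refl s, hst⟩, hfs⟩
    obtain ⟨hs'S⟩ : ∃ _ : sSup S ∈ S, True := ⟨hScpt.sSup_mem hSne, trivial⟩
    set s' := sSup S
    have hs't : s' < t := lt_of_le_of_ne hs'S.1.2 (by
      intro he; rw [he] at hs'S; exact absurd hs'S.2 (not_le.2 hlt))
    have hmono : AntitoneOn f (Set.Icc s' t) := by
      apply antitoneOn_of_deriv_nonpos (convex_Icc s' t) hcont.continuousOn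
        (hdiff.differentiableOn)
      intro u hu
      rw [interior_Icc] at hu
      have hηu : η ≤ f u := by
        by_contra hc
        push_neg at hc
        have : u ∈ S := ⟨⟨hs'S.1.1.trans hu.1.le, hu.2.le⟩, hc.le⟩
        exact absurd (le_csSup hScpt.bddAbove this) (not_le.2 hu.1)
      have := H u (hTs.trans (hs'S.1.1.trans hu.1.le)) hηu
      rw [(hf u).deriv]
      linarith
    have := hmono (Set.left_mem_Icc.2 hs't.le) (Set.right_mem_Icc.2 hs't.le) hs't.le
    exact absurd (this.trans hs'S.2) (not_le.2 hlt)
  have reach : ∃ s, T ≤ s ∧ f s ≤ η := by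
    by_contra hc
    push_neg at hc
    have hfT : η < f T := hc T le_rfl
    set t₁ := T + (f T - η) / ρ + 1 with ht₁
    have hT₁ : T ≤ t₁ := by
      have : 0 ≤ (f T - η) / ρ := div_nonneg (by linarith) hρ.le
      rw [ht₁]; linarith
    have hmono : AntitoneOn (fun t => f t + ρ * t) (Set.Icc T t₁) := by
      apply antitoneOn_of_deriv_nonpos (convex_Icc T t₁)
        (by fun_prop) (by fun_prop)
      intro u hu
      rw [interior_Icc] at hu
      have hd : HasDerivAt (fun t => f t + ρ * t) (f' u + ρ) u := by
        have := (hf u).add ((hasDerivAt_id' u).const_mul ρ); rwa [mul_one] at this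
      rw [hd.deriv]
      have := H u hu.1.le (hc u hu.1.le).le
      linarith
    have := hmono (Set.left_mem_Icc.2 hT₁) (Set.right_mem_Icc.2 hT₁) hT₁
    have hlt := hc t₁ hT₁
    rw [ht₁] at this
    have hρq : ρ * ((f T - η) / ρ) = f T - η := by field_simp
    simp only at this
    nlinarith [this, hlt, hρq]
  obtain ⟨s, hTs, hfs⟩ := reach
  filter_upwards [eventually_ge_atTop s] with t ht
  exact stay s hTs hfs t ht

lemma grad_cont {U : EuclideanSpace ℝ (Fin r) → ℝ} (hU : ContDiff ℝ 1 U) :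
    Continuous (fun z => gradient U z) := by
  have h1 : Continuous (fderiv ℝ U) := hU.continuous_fderiv one_ne_zero
  exact (InnerProductSpace.toDual ℝ (EuclideanSpace ℝ (Fin r))).symm.continuous.comp h1

lemma grad_min_on_annulus {U : EuclideanSpace ℝ (Fin r) → ℝ} (hU : ContDiff ℝ 1 U)
    {xe : EuclideanSpace ℝ (Fin r)} (hcrit : ∀ z, gradient U z = 0 ↔ z = xe)
    (hA7 : ∃ δ₂ > 0, ∃ c > 0, ∀ z, δ₂ ≤ ‖z - xe‖ → c ≤ ‖gradient U z‖)
    {ε : ℝ} (hε : 0 < ε) :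
    ∃ c > 0, ∀ z, ε ≤ ‖z - xe‖ → c ≤ ‖gradient U z‖ := by
  obtain ⟨δ₂, hδ₂, cδ, hcδ, hball⟩ := hA7
  set K : Set (EuclideanSpace ℝ (Fin r)) := {z | ε ≤ ‖z - xe‖ ∧ ‖z - xe‖ ≤ δ₂} with hK
  have hcont : Continuous fun z : EuclideanSpace ℝ (Fin r) => ‖z - xe‖ :=
    (continuous_id.sub continuous_const).norm
  have hKclosed : IsClosed K :=
    (isClosed_le continuous_const hcont).inter (isClosed_le hcont continuous_const)
  have hKsub : K ⊆ Metric.closedBall xe δ₂ := fun z hz => by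
    rw [Metric.mem_closedBall, dist_eq_norm]; exact hz.2
  have hKcompact : IsCompact K :=
    (isCompact_closedBall xe δ₂).of_isClosed_subset hKclosed hKsub
  by_cases hne : K.Nonempty
  · obtain ⟨z₀, hz₀K, hz₀min⟩ :=
      hKcompact.exists_isMinOn hne ((grad_cont hU).norm.continuousOn)
    have hz₀pos : 0 < ‖gradient U z₀‖ := by
      rw [norm_pos_iff]
      intro h0
      have := (hcrit z₀).1 h0
      rw [this] at hz₀K
      have h5 : ε ≤ ‖xe - xe‖ := hz₀K.1
      rw [sub_self, norm_zero] at h5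
      exact absurd h5 (not_le.2 hε)
    refine ⟨min cδ ‖gradient U z₀‖, lt_min hcδ hz₀pos, fun z hz => ?_⟩
    rcases le_or_gt ‖z - xe‖ δ₂ with hle | hlt
    · exact le_trans (min_le_right _ _) ((isMinOn_iff.1 hz₀min) z ⟨hz, hle⟩)
    · exact le_trans (min_le_left _ _) (hball z hlt.le)
  · refine ⟨cδ, hcδ, fun z hz => ?_⟩
    rcases le_or_gt ‖z - xe‖ δ₂ with hle | hlt
    · exact absurd ⟨z, hz, hle⟩ hne
    · exact hball z hlt.le

lemma U_min_on_annulus {U : EuclideanSpace ℝ (Fin r) → ℝ} (hU : ContDiff ℝ 1 U)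
    {xe : EuclideanSpace ℝ (Fin r)} (hcrit : ∀ z, gradient U z = 0 ↔ z = xe)
    (hmin : ∀ z, U xe ≤ U z)
    (hA6 : ∃ δ₁ > 0, ∃ c, U xe < c ∧ ∀ z, δ₁ ≤ ‖z - xe‖ → c ≤ U z)
    {ε : ℝ} (hε : 0 < ε) :
    ∃ b, U xe < b ∧ ∀ z, ε ≤ ‖z - xe‖ → b ≤ U z := by
  obtain ⟨δ₁, hδ₁, c, hcU, hball⟩ := hA6
  set K : Set (EuclideanSpace ℝ (Fin r)) := {z | ε ≤ ‖z - xe‖ ∧ ‖z - xe‖ ≤ δ₁} with hK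
  have hcont : Continuous fun z : EuclideanSpace ℝ (Fin r) => ‖z - xe‖ :=
    (continuous_id.sub continuous_const).norm
  have hKclosed : IsClosed K :=
    (isClosed_le continuous_const hcont).inter (isClosed_le hcont continuous_const)
  have hKsub : K ⊆ Metric.closedBall xe δ₁ := fun z hz => by
    rw [Metric.mem_closedBall, dist_eq_norm]; exact hz.2
  have hKcompact : IsCompact K :=
    (isCompact_closedBall xe δ₁).of_isClosed_subset hKclosed hKsub
  by_cases hne : K.Nonempty
  · obtain ⟨z₀, hz₀K, hz₀min⟩ := hKcompact.exists_isMinOn hne hU.continuous.continuousOn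
    have hz₀gt : U xe < U z₀ := by
      rcases lt_or_eq_of_le (hmin z₀) with h | h
      · exact h
      · exfalso
        have hloc : IsLocalMin U z₀ := Filter.Eventually.of_forall (fun z => h ▸ hmin z)
        have h0 : fderiv ℝ U z₀ = 0 := hloc.fderiv_eq_zero
        have hg0 : gradient U z₀ = 0 := by rw [gradient, h0, map_zero]
        have := (hcrit z₀).1 hg0
        rw [this] at hz₀K
        have h5 : ε ≤ ‖xe - xe‖ := hz₀K.1
        rw [sub_self, norm_zero] at h5
        exact absurd h5 (not_le.2 hε)
    refine ⟨min c (U z₀), lt_min hcU hz₀gt, fun z hz => ?_⟩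
    rcases le_or_gt ‖z - xe‖ δ₁ with hle | hlt
    · exact le_trans (min_le_right _ _) ((isMinOn_iff.1 hz₀min) z ⟨hz, hle⟩)
    · exact le_trans (min_le_left _ _) (hball z hlt.le)
  · refine ⟨c, hcU, fun z hz => ?_⟩
    rcases le_or_gt ‖z - xe‖ δ₁ with hle | hlt
    · exact absurd ⟨z, hz, hle⟩ hne
    · exact hball z hlt.le

end helpers

/-- Self-recovery from rest (last part of Theorem 2.3): if ẋ(0)=0 and ẏ(0)=0 then
μ_α = h_α(x(0)), x(0) is the critical point of U_μ, and x(t) → x(0). -/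
theorem stmt_5 (r n : ℕ) (c₁ c₂ c₃ : ℝ) (hc₁ : 0 < c₁) (hc₂ : 0 < c₂) (hc₃ : 0 < c₃)
    (M : ℝ → Matrix (Fin r) (Fin r) ℝ)
    (hMsym : ∀ t, (M t).IsHermitian)
    (hMpd : ∀ t, (M t).PosDef)
    (hMlo : ∀ t, (M t - c₁ • (1 : Matrix (Fin r) (Fin r) ℝ)).PosSemidef)
    (hMhi : ∀ t, ((c₂ • (1 : Matrix (Fin r) (Fin r) ℝ)) - M t).PosSemidef)
    (mxy : ℝ → Matrix (Fin r) (Fin n) ℝ)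
    (hmxy : ∀ t, ‖mxy t‖ ≤ c₃)
    (y' : ℝ → EuclideanSpace ℝ (Fin n))
    (hy' : Filter.Tendsto y' Filter.atTop (nhds 0))
    (U : EuclideanSpace ℝ (Fin r) → ℝ) (hU : ContDiff ℝ 1 U)
    (h : Fin r → EuclideanSpace ℝ (Fin r) → ℝ) (μ : Fin r → ℝ)
    -- ∂U_μ/∂x^α = h_α(x) − μ_α
    (hUh : ∀ z α, gradient U z α = h α z - μ α)
    (xe : EuclideanSpace ℝ (Fin r))
    -- A5 -- A7
    (hcrit : ∀ z, gradient U z = 0 ↔ z = xe)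
    (hmin : ∀ z, U xe ≤ U z)
    (hA6 : ∃ δ₁ > 0, ∃ c, U xe < c ∧ ∀ z, δ₁ ≤ ‖z - xe‖ → c ≤ U z)
    (hA7 : ∃ δ₂ > 0, ∃ c > 0, ∀ z, δ₂ ≤ ‖z - xe‖ → c ≤ ‖gradient U z‖)
    (x : ℝ → EuclideanSpace ℝ (Fin r))
    (x' : ℝ → EuclideanSpace ℝ (Fin r))
    -- dynamics  ẋ^α = −m^{αβ}(∂U_μ/∂x^β) − m^{αβ} m_{βa} ẏ^a
    (hx : ∀ α t, HasDerivAt (fun s => x s α) (x' t α) t)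
    (hode : ∀ α t, x' t α =
      -(∑ β, (M t)⁻¹ α β * gradient U (x t) β)
      - ∑ β, (M t)⁻¹ α β * ∑ a, mxy t β a * y' t a)
    -- initial rest conditions
    (hx0 : x' 0 = 0) (hy0 : y' 0 = 0) :
    (∀ α, μ α = h α (x 0)) ∧ gradient U (x 0) = 0 ∧
      Filter.Tendsto x Filter.atTop (nhds (x 0)) := by
  -- Part 1: gradient at x 0 vanishes
  have hg0 : gradient U (x 0) = 0 := by
    set gv : EuclideanSpace ℝ (Fin r) := gradient U (x 0) with hgv
    have hz : (M 0)⁻¹ *ᵥ (gv : Fin r → ℝ) = 0 := by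
      funext α
      have h1 : x' 0 α = -(∑ β, (M 0)⁻¹ α β * gv β)
          - ∑ β, (M 0)⁻¹ α β * ∑ a, mxy 0 β a * y' 0 a := hode α 0
      rw [hy0] at h1
      simp only [hx0] at h1
      have h2 : (0 : EuclideanSpace ℝ (Fin r)) α = 0 := rfl
      rw [h2] at h1
      have h3 : ∑ β, (M 0)⁻¹ α β * ∑ a, mxy 0 β a * (0 : EuclideanSpace ℝ (Fin n)) a = 0 := by
        simp
      rw [h3, sub_zero] at h1
      have h4 : ((M 0)⁻¹ *ᵥ (gv : Fin r → ℝ)) α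
          = ∑ β, (M 0)⁻¹ α β * gv β := rfl
      rw [h4]
      have h5 : (0 : Fin r → ℝ) α = 0 := rfl
      rw [h5]
      linarith [h1]
    have hdet : IsUnit (M 0).det := isUnit_iff_isUnit_det _ |>.1 (hMpd 0).isUnit
    have hMM : (M 0) *ᵥ ((M 0)⁻¹ *ᵥ (gv : Fin r → ℝ)) = gv := by
      rw [Matrix.mulVec_mulVec, Matrix.mul_nonsing_inv _ hdet, Matrix.one_mulVec]
    rw [hz, Matrix.mulVec_zero] at hMM
    ext α
    have h6 := congrFun hMM α
    exact h6.symm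
  have hx0e : x 0 = xe := (hcrit (x 0)).1 hg0
  refine ⟨fun α => by
      have hα := hUh (x 0) α
      rw [hg0] at hα
      have h2 : (0 : EuclideanSpace ℝ (Fin r)) α = 0 := rfl
      rw [h2] at hα
      linarith,
    hg0, ?_⟩
  rw [hx0e]
  -- Part 2: convergence
  have hx' : ∀ t, HasDerivAt x (x' t) t := by
    intro t
    have hp : HasDerivAt (fun s => (PiLp.continuousLinearEquiv 2 ℝ (fun _ : Fin r => ℝ)) (x s))
        ((PiLp.continuousLinearEquiv 2 ℝ (fun _ : Fin r => ℝ)) (x' t)) t :=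
      hasDerivAt_pi.2 (fun α => hx α t)
    have hp2 := ((PiLp.continuousLinearEquiv 2 ℝ (fun _ : Fin r => ℝ)).symm.toContinuousLinearMap.hasFDerivAt).comp_hasDerivAt t hp
    exact hp2
  have hfD : ∀ t, HasDerivAt (fun s => U (x s)) (⟪gradient U (x t), x' t⟫) t := by
    intro t
    have hgrad : HasGradientAt U (gradient U (x t)) (x t) :=
      ((hU.differentiable one_ne_zero) (x t)).hasGradientAt
    have := hgrad.hasFDerivAt.comp_hasDerivAt t (hx' t)
    rw [InnerProductSpace.toDual_apply_apply] at this; exact this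
  set K : ℝ := (r * n * c₃) / c₁ + 1 with hKdef
  have hK : 0 < K := by positivity
  -- pointwise bound on the energy derivative
  have hDb : ∀ t, (⟪gradient U (x t), x' t⟫ : ℝ) ≤ -(‖gradient U (x t)‖ ^ 2 / c₂)
      + K * ‖y' t‖ * ‖gradient U (x t)‖ := by
    intro t
    set g : EuclideanSpace ℝ (Fin r) := gradient U (x t) with hgdef
    set p : Fin r → ℝ := mxy t *ᵥ (y' t : Fin n → ℝ) with hpdef
    have hx'eq : (x' t : Fin r → ℝ)
        = -((M t)⁻¹ *ᵥ (g : Fin r → ℝ)) - ((M t)⁻¹ *ᵥ p) := by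
      funext α
      exact hode α t
    have hDt : (⟪g, x' t⟫ : ℝ) = -((g : Fin r → ℝ) ⬝ᵥ ((M t)⁻¹ *ᵥ (g : Fin r → ℝ)))
        - (g : Fin r → ℝ) ⬝ᵥ ((M t)⁻¹ *ᵥ p) := by
      rw [euclid_inner_dot, hx'eq, dotProduct_sub, dotProduct_neg]
    have e1 : ‖g‖ ^ 2 / c₂ ≤ (g : Fin r → ℝ) ⬝ᵥ ((M t)⁻¹ *ᵥ (g : Fin r → ℝ)) :=
      qf_inv_lower hc₂ (hMpd t) (hMhi t) g
    have e2 : |(g : Fin r → ℝ) ⬝ᵥ ((M t)⁻¹ *ᵥ p)| ≤ ‖g‖ * (K * ‖y' t‖) := by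
      have ha : |(g : Fin r → ℝ) ⬝ᵥ ((M t)⁻¹ *ᵥ p)| ≤ ‖g‖ * ‖toE ((M t)⁻¹ *ᵥ p)‖ := by
        rw [show (g : Fin r → ℝ) ⬝ᵥ ((M t)⁻¹ *ᵥ p) = ⟪g, toE ((M t)⁻¹ *ᵥ p)⟫ from
          (euclid_inner_dot g (toE ((M t)⁻¹ *ᵥ p))).symm]
        exact abs_real_inner_le_norm g (toE ((M t)⁻¹ *ᵥ p))
      have hb : ‖toE ((M t)⁻¹ *ᵥ p)‖ ≤ ‖toE p‖ / c₁ :=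
        inv_mulVec_norm_le hc₁ (hMpd t) (hMlo t) p
      have hcb : ‖toE p‖ ≤ (r * n * c₃) * ‖y' t‖ :=
        rect_mulVec_norm_le hc₃.le (hmxy t) (y' t)
      have hd : ‖toE ((M t)⁻¹ *ᵥ p)‖ ≤ K * ‖y' t‖ := by
        refine hb.trans ?_
        have hyn : 0 ≤ ‖y' t‖ := norm_nonneg _
        calc ‖toE p‖ / c₁ ≤ ((r : ℝ) * n * c₃ * ‖y' t‖) / c₁ := by gcongr
          _ = ((r : ℝ) * n * c₃ / c₁) * ‖y' t‖ := by ring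
          _ ≤ K * ‖y' t‖ := by
              rw [hKdef]
              exact mul_le_mul_of_nonneg_right (by linarith) hyn
      calc |(g : Fin r → ℝ) ⬝ᵥ ((M t)⁻¹ *ᵥ p)| ≤ ‖g‖ * ‖toE ((M t)⁻¹ *ᵥ p)‖ := ha
        _ ≤ ‖g‖ * (K * ‖y' t‖) := mul_le_mul_of_nonneg_left hd (norm_nonneg g)
    rw [hDt]
    have habs := abs_le.1 e2
    linarith [e1, habs.1]
  -- convergence via the barrier lemma
  rw [Metric.tendsto_nhds]
  intro ε hε
  obtain ⟨b, hbgt, hbball⟩ := U_min_on_annulus hU hcrit hmin hA6 hε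
  set η : ℝ := (b - U xe) / 2 with hηdef
  have hη : 0 < η := by rw [hηdef]; linarith
  set ℓ : ℝ := U xe + η with hℓdef
  have hℓb : ℓ < b := by rw [hℓdef, hηdef]; linarith
  obtain ⟨ε', hε', hUε'⟩ : ∃ ε' > 0, ∀ z : EuclideanSpace ℝ (Fin r),
      ‖z - xe‖ < ε' → U z < ℓ := by
    have hcU : ContinuousAt U xe := hU.continuous.continuousAt
    rw [Metric.continuousAt_iff] at hcU
    obtain ⟨δ, hδ, hball⟩ := hcU η hη
    refine ⟨δ, hδ, fun z hz => ?_⟩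
    have h6 := hball (x := z) (by rwa [dist_eq_norm])
    rw [Real.dist_eq] at h6
    have h7 := (abs_lt.1 h6).2
    rw [hℓdef]
    linarith
  obtain ⟨cs, hcs, hcsball⟩ := grad_min_on_annulus hU hcrit hA7 hε'
  set ρ : ℝ := cs ^ 2 / (2 * c₂) with hρdef
  have hρ : 0 < ρ := by rw [hρdef]; positivity
  obtain ⟨T, hT⟩ : ∃ T, ∀ t ≥ T, ‖y' t‖ ≤ cs / (2 * c₂ * K) := by
    have hpos : 0 < cs / (2 * c₂ * K) := by positivity
    have h8 := Metric.tendsto_nhds.1 hy' _ hpos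
    rw [Filter.eventually_atTop] at h8
    obtain ⟨T, hT⟩ := h8
    exact ⟨T, fun t ht => by
      have h9 := hT t ht
      rw [dist_zero_right] at h9
      exact h9.le⟩
  have Hbar : ∀ t, T ≤ t → ℓ ≤ U (x t) → (⟪gradient U (x t), x' t⟫ : ℝ) ≤ -ρ := by
    intro t hTt hft
    have hfar : ε' ≤ ‖x t - xe‖ := by
      by_contra hcon
      push_neg at hcon
      exact absurd hft (not_le.2 (hUε' _ hcon))
    have hgge : cs ≤ ‖gradient U (x t)‖ := hcsball _ hfar
    have hyb : ‖y' t‖ ≤ cs / (2 * c₂ * K) := hT t hTt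
    have hDt := hDb t
    set gn : ℝ := ‖gradient U (x t)‖ with hgn
    have hgn0 : 0 ≤ gn := norm_nonneg _
    have h2c : (0 : ℝ) < 2 * c₂ := by positivity
    have h1 : K * ‖y' t‖ * gn ≤ cs * gn / (2 * c₂) := by
      have h1a := mul_le_mul_of_nonneg_left hyb hK.le
      have h1b := mul_le_mul_of_nonneg_right h1a hgn0
      have h1c : K * (cs / (2 * c₂ * K)) * gn = cs * gn / (2 * c₂) := by
        field_simp
      linarith [h1b, h1c.le, h1c.ge]
    have h4 : cs * gn / (2 * c₂) ≤ gn ^ 2 / (2 * c₂) := by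
      gcongr <;> nlinarith [mul_le_mul_of_nonneg_right hgge hgn0]
    have h5 : cs ^ 2 / (2 * c₂) ≤ gn ^ 2 / (2 * c₂) := by
      gcongr <;> nlinarith [mul_le_mul_of_nonneg_right hgge hgn0, hgge, hcs.le]
    have heq : -(gn ^ 2 / c₂) + gn ^ 2 / (2 * c₂) = -(gn ^ 2 / (2 * c₂)) := by ring
    rw [hρdef]
    linarith [hDt, h1, h4, h5, heq]
  have hev := barrier (f := fun t => U (x t)) (f' := fun t => (⟪gradient U (x t), x' t⟫ : ℝ))
    hfD hρ Hbar
  filter_upwards [hev] with t hft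
  rw [dist_eq_norm]
  by_contra hcon
  push_neg at hcon
  have h10 := hbball _ hcon
  have hxt : U (x t) ≤ ℓ := hft
  linarith
end

section
/- Suppose ‖g‖ ≥ ε₁ and ‖w‖ < ℓε₁ with 0 < ℓ < 1, and M is symmetric with (1/c₂)I ⪯ M ⪯ (1/c₁)I. Then gᵀM(−g − w) ≤ −((1/c₂)(1 − ℓ/2)² − ℓ²/(4c₁))ε₁². -/
set_option maxHeartbeats 1000000 in
/-- Key quantitative decay estimate in the proof of the self-recovery theorem. -/
theorem stmt_9 (r : ℕ) (c₁ c₂ ε₁ ℓ : ℝ) (hc₁ : 0 < c₁) (hc₂ : 0 < c₂)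
    (hε₁ : 0 < ε₁) (hℓ0 : 0 < ℓ) (hℓ1 : ℓ < 1)
    (M : Matrix (Fin r) (Fin r) ℝ) (hsym : M.IsHermitian)
    (hlo : (M - (1 / c₂) • (1 : Matrix (Fin r) (Fin r) ℝ)).PosSemidef)
    (hhi : ((1 / c₁) • (1 : Matrix (Fin r) (Fin r) ℝ) - M).PosSemidef)
    (g w : EuclideanSpace ℝ (Fin r))
    (hg : ε₁ ≤ ‖g‖) (hw : ‖w‖ < ℓ * ε₁) :
    (∑ α, ∑ β, g α * M α β * (-(g β) - w β)) ≤
      -((1 / c₂) * (1 - ℓ / 2) ^ 2 - ℓ ^ 2 / (4 * c₁)) * ε₁ ^ 2 := by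
  have hsymm : ∀ i j, M i j = M j i := by
    intro i j
    have := hsym.apply j i
    simpa using this
  have hid : ∀ (c : ℝ) (x : Fin r → ℝ),
      dotProduct (star x) ((c • (1 : Matrix (Fin r) (Fin r) ℝ)).mulVec x)
        = c * ∑ α, x α ^ 2 := by
    intro c x
    simp [Matrix.smul_mulVec, Matrix.one_mulVec, dotProduct_smul,
      dotProduct, smul_eq_mul, Finset.mul_sum, sq, mul_left_comm, mul_comm]
  have hM : ∀ x : Fin r → ℝ,
      dotProduct (star x) (M.mulVec x) = ∑ α, ∑ β, x α * M α β * x β := by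
    intro x
    simp only [star_trivial, dotProduct, Matrix.mulVec, Finset.mul_sum]
    exact Finset.sum_congr rfl fun α _ => Finset.sum_congr rfl fun β _ => by ring
  have hQlo : ∀ x : Fin r → ℝ, (1/c₂) * (∑ α, x α ^ 2) ≤ ∑ α, ∑ β, x α * M α β * x β := by
    intro x
    have h := hlo.dotProduct_mulVec_nonneg x
    rw [Matrix.sub_mulVec, dotProduct_sub, hM x, hid (1/c₂) x] at h
    linarith
  have hQhi : ∀ x : Fin r → ℝ, (∑ α, ∑ β, x α * M α β * x β) ≤ (1/c₁) * (∑ α, x α ^ 2) := by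
    intro x
    have h := hhi.dotProduct_mulVec_nonneg x
    rw [Matrix.sub_mulVec, dotProduct_sub, hM x, hid (1/c₁) x] at h
    linarith
  set v : Fin r → ℝ := fun α => (1/2) * w α with hv
  set y : Fin r → ℝ := fun α => g α + v α with hy
  have hswap : (∑ α, ∑ β, v α * M α β * g β) = ∑ α, ∑ β, g α * M α β * v β := by
    rw [Finset.sum_comm]
    refine Finset.sum_congr rfl fun α _ => Finset.sum_congr rfl fun β _ => ?_
    rw [hsymm β α]; ring
  have e1 : (∑ α, ∑ β, g α * M α β * (-(g β) - w β))
      = -(∑ α, ∑ β, g α * M α β * g β) - 2 * ∑ α, ∑ β, g α * M α β * v β := by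
    rw [← Finset.sum_neg_distrib, Finset.mul_sum, ← Finset.sum_sub_distrib]
    refine Finset.sum_congr rfl fun α _ => ?_
    rw [← Finset.sum_neg_distrib, Finset.mul_sum, ← Finset.sum_sub_distrib]
    refine Finset.sum_congr rfl fun β _ => ?_
    simp only [hv]; ring
  have e2' : (∑ α, ∑ β, y α * M α β * y β)
      = (∑ α, ∑ β, g α * M α β * g β) + (∑ α, ∑ β, g α * M α β * v β)
        + ((∑ α, ∑ β, v α * M α β * g β) + (∑ α, ∑ β, v α * M α β * v β)) := by
    rw [← Finset.sum_add_distrib, ← Finset.sum_add_distrib, ← Finset.sum_add_distrib]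
    refine Finset.sum_congr rfl fun α _ => ?_
    rw [← Finset.sum_add_distrib, ← Finset.sum_add_distrib, ← Finset.sum_add_distrib]
    refine Finset.sum_congr rfl fun β _ => ?_
    simp only [hy]; ring
  have e2 : (∑ α, ∑ β, y α * M α β * y β)
      = (∑ α, ∑ β, g α * M α β * g β) + 2 * (∑ α, ∑ β, g α * M α β * v β)
        + (∑ α, ∑ β, v α * M α β * v β) := by
    rw [e2', hswap]; ring
  -- norms
  have hnormsq : ∀ x : EuclideanSpace ℝ (Fin r), (∑ α, x α ^ 2) = ‖x‖ ^ 2 := by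
    intro x
    rw [EuclideanSpace.norm_eq, Real.sq_sqrt (by positivity)]
    simp [Real.norm_eq_abs, sq_abs]
  have hvsum : (∑ α, v α ^ 2) = (1/4) * ‖w‖ ^ 2 := by
    rw [← hnormsq w, Finset.mul_sum]
    refine Finset.sum_congr rfl fun α _ => ?_
    simp only [hv]; ring
  have hwn : (0:ℝ) ≤ ‖w‖ := norm_nonneg _
  have hgn : ‖w‖ ^ 2 ≤ (ℓ * ε₁) ^ 2 := by nlinarith
  have hysum : ((1 - ℓ/2) * ε₁) ^ 2 ≤ ∑ α, y α ^ 2 := by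
    have hyeq : (∑ α, y α ^ 2) = ‖g + (1/2 : ℝ) • w‖ ^ 2 := by
      rw [← hnormsq (g + (1/2 : ℝ) • w)]
      refine Finset.sum_congr rfl fun α _ => ?_
      simp [hy, hv, PiLp.add_apply, PiLp.smul_apply, smul_eq_mul]
    rw [hyeq]
    have h1 : ‖g‖ - ‖-((1/2 : ℝ) • w)‖ ≤ ‖g - -((1/2 : ℝ) • w)‖ := norm_sub_norm_le _ _
    have h2 : ‖-((1/2 : ℝ) • w)‖ = (1/2) * ‖w‖ := by
      rw [norm_neg, norm_smul]; simp
    have h3 : g - -((1/2 : ℝ) • w) = g + (1/2 : ℝ) • w := by abel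
    rw [h3, h2] at h1
    have hlb : (1 - ℓ/2) * ε₁ ≤ ‖g + (1/2 : ℝ) • w‖ := by nlinarith
    have hpos : (0:ℝ) ≤ (1 - ℓ/2) * ε₁ := by nlinarith
    exact pow_le_pow_left₀ hpos hlb 2
  have hQy := hQlo y
  have hQv := hQhi v
  rw [show (∑ α, ∑ β, g α * M α β * (-(g β) - w β))
      = -(∑ α, ∑ β, y α * M α β * y β) + (∑ α, ∑ β, v α * M α β * v β) by
    rw [e1, e2]; ring]
  have hc₁' : (0:ℝ) < 1/c₁ := by positivity
  have hc₂' : (0:ℝ) < 1/c₂ := by positivity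
  have b1 : (1/c₂) * ((1 - ℓ/2) * ε₁) ^ 2 ≤ ∑ α, ∑ β, y α * M α β * y β :=
    le_trans (mul_le_mul_of_nonneg_left hysum (le_of_lt hc₂')) hQy
  have b2 : (∑ α, ∑ β, v α * M α β * v β) ≤ (1/c₁) * ((1/4) * (ℓ * ε₁) ^ 2) := by
    refine le_trans hQv ?_
    rw [hvsum]
    have h4 : (0:ℝ) ≤ 1/c₁ := le_of_lt hc₁'
    nlinarith [hgn]
  have hrhs : -((1/c₂) * ((1 - ℓ/2) * ε₁) ^ 2) + (1/c₁) * ((1/4) * (ℓ * ε₁) ^ 2)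
      = -((1 / c₂) * (1 - ℓ / 2) ^ 2 - ℓ ^ 2 / (4 * c₁)) * ε₁ ^ 2 := by
    field_simp; ring
  linarith
end

section
/- Let U_μ: ℝ^r → ℝ be C¹ with ‖dU_μ(x)‖ → ∞ and U_μ(x) → ∞ as ‖x‖ → ∞. Suppose x(t) solves ẋ^α = −m^{αβ}(t)∂U_μ/∂x^β(x) − m^{αβ}(t)m_{βa}(t)ẏ^a(t), where c₁I ⪯ (m_{αβ}(t)) ⪯ c₂I, ‖(m_{αa}(t))‖ ≤ c₃, and ‖ẏ(t)‖ ≤ c₄ for all t ≥ 0. Then the trajectory x(t) is bounded. -/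
attribute [local instance] Matrix.normedAddCommGroup
open Matrix
open scoped RealInnerProductSpace

lemma aux_coord {k : ℕ} (v : EuclideanSpace ℝ (Fin k)) (i : Fin k) : |v i| ≤ ‖v‖ := by
  rw [EuclideanSpace.norm_eq, ← Real.sqrt_sq_eq_abs]
  simp only [Real.norm_eq_abs, sq_abs]
  exact Real.sqrt_le_sqrt (Finset.single_le_sum (f := fun j => v j ^ 2)
    (fun j _ => sq_nonneg _) (Finset.mem_univ i))

lemma aux_norm_le {k : ℕ} (v : EuclideanSpace ℝ (Fin k)) {a : ℝ} (ha : 0 ≤ a)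
    (h : ∀ i, |v i| ≤ a) : ‖v‖ ≤ k * a := by
  rw [EuclideanSpace.norm_eq]
  simp only [Real.norm_eq_abs, sq_abs]
  have h1 : ∑ i, v i ^ 2 ≤ (k : ℝ) * a ^ 2 := by
    calc ∑ i, v i ^ 2 ≤ ∑ _i : Fin k, a ^ 2 :=
          Finset.sum_le_sum fun i _ => by
            have := h i; nlinarith [abs_nonneg (v i), sq_abs (v i)]
      _ = (k : ℝ) * a ^ 2 := by simp [Finset.sum_const, mul_comm]
  have hk : (k : ℝ) ≤ (k : ℝ) ^ 2 := by
    have : k ≤ k ^ 2 := Nat.le_self_pow (by norm_num) k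
    exact_mod_cast this
  have h2 : ∑ i, v i ^ 2 ≤ ((k : ℝ) * a) ^ 2 := by nlinarith [sq_nonneg a]
  calc Real.sqrt (∑ i, v i ^ 2) ≤ Real.sqrt (((k:ℝ) * a) ^ 2) := Real.sqrt_le_sqrt h2
    _ = (k : ℝ) * a := Real.sqrt_sq (by positivity)

lemma aux_inner_dot {k : ℕ} (a b : EuclideanSpace ℝ (Fin k)) :
    ⟪a, b⟫ = (a : Fin k → ℝ) ⬝ᵥ (b : Fin k → ℝ) := by
  simp [PiLp.inner_apply, dotProduct, mul_comm]

lemma aux_psd_nonneg {k : ℕ} {A : Matrix (Fin k) (Fin k) ℝ} (hA : A.PosSemidef)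
    (v : Fin k → ℝ) : 0 ≤ v ⬝ᵥ (A *ᵥ v) := by simpa using hA.dotProduct_mulVec_nonneg v

lemma aux_quad_lo {k : ℕ} {A : Matrix (Fin k) (Fin k) ℝ} {c : ℝ}
    (h : (A - c • (1 : Matrix (Fin k) (Fin k) ℝ)).PosSemidef) (v : Fin k → ℝ) :
    c * (v ⬝ᵥ v) ≤ v ⬝ᵥ (A *ᵥ v) := by
  have h0 := aux_psd_nonneg h v
  rw [Matrix.sub_mulVec, Matrix.smul_mulVec, Matrix.one_mulVec, dotProduct_sub,
    dotProduct_smul] at h0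
  simpa [smul_eq_mul] using sub_nonneg.mp h0

lemma aux_quad_hi {k : ℕ} {A : Matrix (Fin k) (Fin k) ℝ} {c : ℝ}
    (h : ((c • (1 : Matrix (Fin k) (Fin k) ℝ)) - A).PosSemidef) (v : Fin k → ℝ) :
    v ⬝ᵥ (A *ᵥ v) ≤ c * (v ⬝ᵥ v) := by
  have h0 := aux_psd_nonneg h v
  rw [Matrix.sub_mulVec, Matrix.smul_mulVec, Matrix.one_mulVec, dotProduct_sub,
    dotProduct_smul] at h0
  simpa [smul_eq_mul] using sub_nonneg.mp h0

lemma aux_dot_symm {k : ℕ} {A : Matrix (Fin k) (Fin k) ℝ} (hsym : Aᵀ = A)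
    (v w : Fin k → ℝ) : v ⬝ᵥ (A *ᵥ w) = w ⬝ᵥ (A *ᵥ v) := by
  calc v ⬝ᵥ (A *ᵥ w) = (v ᵥ* A) ⬝ᵥ w := dotProduct_mulVec v A w
    _ = (Aᵀ *ᵥ v) ⬝ᵥ w := by rw [Matrix.mulVec_transpose]
    _ = (A *ᵥ v) ⬝ᵥ w := by rw [hsym]
    _ = w ⬝ᵥ (A *ᵥ v) := dotProduct_comm _ _

lemma aux_CS {k : ℕ} {A : Matrix (Fin k) (Fin k) ℝ} (hA : A.PosSemidef) (hsym : Aᵀ = A)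
    (v w : Fin k → ℝ) :
    (w ⬝ᵥ (A *ᵥ v)) ^ 2 ≤ (w ⬝ᵥ (A *ᵥ w)) * (v ⬝ᵥ (A *ᵥ v)) := by
  have key : ∀ lam : ℝ, 0 ≤ (v ⬝ᵥ (A *ᵥ v)) * (lam * lam) + (2 * (w ⬝ᵥ (A *ᵥ v))) * lam
      + (w ⬝ᵥ (A *ᵥ w)) := by
    intro lam
    have h0 := aux_psd_nonneg hA (w + lam • v)
    rw [Matrix.mulVec_add, Matrix.mulVec_smul] at h0
    rw [add_dotProduct, smul_dotProduct, dotProduct_add, dotProduct_add, dotProduct_smul,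
      dotProduct_smul, smul_eq_mul, smul_eq_mul] at h0
    simp only [smul_eq_mul] at h0
    have hc := aux_dot_symm hsym v w
    rw [hc] at h0
    ring_nf at h0 ⊢
    linarith [h0]
  have hd := discrim_le_zero key
  rw [discrim] at hd
  nlinarith [hd]

lemma aux_op {k : ℕ} {A : Matrix (Fin k) (Fin k) ℝ} {c : ℝ} (hA : A.PosSemidef)
    (hsym : Aᵀ = A) (hhi : ∀ v, v ⬝ᵥ (A *ᵥ v) ≤ c * (v ⬝ᵥ v)) (v : Fin k → ℝ) :
    (A *ᵥ v) ⬝ᵥ (A *ᵥ v) ≤ c ^ 2 * (v ⬝ᵥ v) := by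
  set w := A *ᵥ v with hw
  have hww : 0 ≤ w ⬝ᵥ w := by
    simp only [dotProduct]; exact Finset.sum_nonneg fun i _ => mul_self_nonneg _
  have hvv : 0 ≤ v ⬝ᵥ v := by
    simp only [dotProduct]; exact Finset.sum_nonneg fun i _ => mul_self_nonneg _
  have h1 := aux_CS hA hsym v w
  have h2 : (w ⬝ᵥ (A *ᵥ w)) * (v ⬝ᵥ (A *ᵥ v)) ≤ (c * (w ⬝ᵥ w)) * (c * (v ⬝ᵥ v)) :=
    mul_le_mul (hhi w) (hhi v) (aux_psd_nonneg hA v) (le_trans (aux_psd_nonneg hA w) (hhi w))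
  rcases eq_or_lt_of_le hww with h0 | h0
  · have : c ^ 2 * (v ⬝ᵥ v) ≥ 0 := by positivity
    linarith
  · have h3 : (w ⬝ᵥ w) * (w ⬝ᵥ w) ≤ (c ^ 2 * (v ⬝ᵥ v)) * (w ⬝ᵥ w) := by nlinarith
    exact le_of_mul_le_mul_right h3 h0

lemma aux_dot_norm {k : ℕ} (a : EuclideanSpace ℝ (Fin k)) :
    (a : Fin k → ℝ) ⬝ᵥ (a : Fin k → ℝ) = ‖a‖ ^ 2 := by
  rw [← aux_inner_dot, real_inner_self_eq_norm_sq]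

lemma aux_step {k : ℕ} {c₁ c₂ C : ℝ} (hc₁ : 0 < c₁) (hc₂ : 0 < c₂) (hC0 : 0 ≤ C)
    {A : Matrix (Fin k) (Fin k) ℝ} (hAT : Aᵀ = A) (hApsd : A.PosSemidef)
    (hlo : ∀ v : Fin k → ℝ, c₁ * (v ⬝ᵥ v) ≤ v ⬝ᵥ (A *ᵥ v))
    (hhi : ∀ v : Fin k → ℝ, v ⬝ᵥ (A *ᵥ v) ≤ c₂ * (v ⬝ᵥ v))
    (g u p w : EuclideanSpace ℝ (Fin k))
    (hgu : A *ᵥ (u : Fin k → ℝ) = (g : Fin k → ℝ))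
    (hpw : A *ᵥ (w : Fin k → ℝ) = (p : Fin k → ℝ))
    (hpC : ‖p‖ ≤ C)
    (hG : c₂ * (C / c₁) + 1 ≤ ‖g‖) :
    -((g : Fin k → ℝ) ⬝ᵥ (u : Fin k → ℝ)) - ((g : Fin k → ℝ) ⬝ᵥ (w : Fin k → ℝ)) ≤ 0 := by
  have h1 : c₁ * ‖u‖ ^ 2 ≤ (g : Fin k → ℝ) ⬝ᵥ (u : Fin k → ℝ) := by
    calc c₁ * ‖u‖ ^ 2 = c₁ * ((u : Fin k → ℝ) ⬝ᵥ (u : Fin k → ℝ)) := by rw [aux_dot_norm]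
      _ ≤ (u : Fin k → ℝ) ⬝ᵥ (A *ᵥ (u : Fin k → ℝ)) := hlo u
      _ = (A *ᵥ (u : Fin k → ℝ)) ⬝ᵥ (u : Fin k → ℝ) := dotProduct_comm _ _
      _ = (g : Fin k → ℝ) ⬝ᵥ (u : Fin k → ℝ) := by rw [hgu]
  have h2 : (g : Fin k → ℝ) ⬝ᵥ (w : Fin k → ℝ) = (u : Fin k → ℝ) ⬝ᵥ (p : Fin k → ℝ) := by
    calc (g : Fin k → ℝ) ⬝ᵥ (w : Fin k → ℝ)
        = (A *ᵥ (u : Fin k → ℝ)) ⬝ᵥ (w : Fin k → ℝ) := by rw [hgu]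
      _ = (w : Fin k → ℝ) ⬝ᵥ (A *ᵥ (u : Fin k → ℝ)) := dotProduct_comm _ _
      _ = (u : Fin k → ℝ) ⬝ᵥ (A *ᵥ (w : Fin k → ℝ)) := aux_dot_symm hAT _ _
      _ = (u : Fin k → ℝ) ⬝ᵥ (p : Fin k → ℝ) := by rw [hpw]
  have hgn : ‖g‖ ≤ c₂ * ‖u‖ := by
    have hop := aux_op hApsd hAT hhi (u : Fin k → ℝ)
    rw [hgu, aux_dot_norm, aux_dot_norm] at hop
    have h3 : ‖g‖ ^ 2 ≤ (c₂ * ‖u‖) ^ 2 := by nlinarith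
    have h4 := Real.sqrt_le_sqrt h3
    rwa [Real.sqrt_sq (norm_nonneg g), Real.sqrt_sq (by positivity)] at h4
  have hup : -(‖u‖ * C) ≤ (u : Fin k → ℝ) ⬝ᵥ (p : Fin k → ℝ) := by
    have h5 : |(u : Fin k → ℝ) ⬝ᵥ (p : Fin k → ℝ)| ≤ ‖u‖ * ‖p‖ := by
      have := abs_real_inner_le_norm u p
      rwa [aux_inner_dot] at this
    have h6 : ‖u‖ * ‖p‖ ≤ ‖u‖ * C := mul_le_mul_of_nonneg_left hpC (norm_nonneg _)
    have := neg_abs_le ((u : Fin k → ℝ) ⬝ᵥ (p : Fin k → ℝ))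
    linarith
  have hCu : C < c₁ * ‖u‖ := by
    have h4 : c₂ * (C / c₁) + 1 ≤ c₂ * ‖u‖ := le_trans hG hgn
    have h5 : C / c₁ < ‖u‖ := by nlinarith
    rw [div_lt_iff₀ hc₁] at h5
    linarith
  have h8 : 0 ≤ c₁ * ‖u‖ ^ 2 - C * ‖u‖ := by nlinarith [norm_nonneg u]
  rw [h2]
  nlinarith [h1, hup, h8]

set_option maxHeartbeats 1000000 in
/-- Damping-induced boundedness (Theorem 2.4). -/
theorem stmt_10 (r n : ℕ) (c₁ c₂ c₃ c₄ : ℝ)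
    (hc₁ : 0 < c₁) (hc₂ : 0 < c₂) (hc₃ : 0 < c₃) (hc₄ : 0 < c₄)
    (U : EuclideanSpace ℝ (Fin r) → ℝ) (hU : ContDiff ℝ 1 U)
    -- coercivity: ‖dU_μ(x)‖ → ∞ and U_μ(x) → ∞ as ‖x‖ → ∞
    (hgradcoer : ∀ R : ℝ, ∃ S : ℝ, ∀ z, S ≤ ‖z‖ → R ≤ ‖gradient U z‖)
    (hUcoer : ∀ R : ℝ, ∃ S : ℝ, ∀ z, S ≤ ‖z‖ → R ≤ U z)
    (M : ℝ → Matrix (Fin r) (Fin r) ℝ)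
    (hMsym : ∀ t, (M t).IsHermitian)
    (hMpd : ∀ t, (M t).PosDef)
    (hMlo : ∀ t, 0 ≤ t → (M t - c₁ • (1 : Matrix (Fin r) (Fin r) ℝ)).PosSemidef)
    (hMhi : ∀ t, 0 ≤ t → ((c₂ • (1 : Matrix (Fin r) (Fin r) ℝ)) - M t).PosSemidef)
    (mxy : ℝ → Matrix (Fin r) (Fin n) ℝ)
    (hmxy : ∀ t, 0 ≤ t → ‖mxy t‖ ≤ c₃)
    (y' : ℝ → EuclideanSpace ℝ (Fin n))
    (hy' : ∀ t, 0 ≤ t → ‖y' t‖ ≤ c₄)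
    (x : ℝ → EuclideanSpace ℝ (Fin r))
    -- dynamics  ẋ^α = −m^{αβ} ∂U_μ/∂x^β − m^{αβ} m_{βa} ẏ^a
    (hode : ∀ α t, 0 ≤ t → HasDerivAt (fun s => x s α)
      (-(∑ β, (M t)⁻¹ α β * gradient U (x t) β)
        - ∑ β, (M t)⁻¹ α β * ∑ a, mxy t β a * y' t a) t) :
    ∃ R : ℝ, ∀ t, 0 ≤ t → ‖x t‖ ≤ R := by
  classical
  set C : ℝ := (r : ℝ) * ((n : ℝ) * (c₃ * c₄)) with hC
  have hC0 : 0 ≤ C := by positivity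
  set G₀ : ℝ := c₂ * (C / c₁) + 1 with hG₀
  -- key: differentiability of t ↦ U (x t) with sign information
  have hkey : ∀ t, 0 ≤ t → ∃ d : ℝ, HasDerivAt (fun s => U (x s)) d t ∧
      (G₀ ≤ ‖gradient U (x t)‖ → d ≤ 0) := by
    intro t ht
    have hMdet : IsUnit (M t).det := isUnit_iff_ne_zero.mpr (hMpd t).det_pos.ne'
    have hMT : (M t)ᵀ = M t := by simpa using (hMsym t).eq
    set g : EuclideanSpace ℝ (Fin r) := gradient U (x t) with hg
    let u : Fin r → ℝ := (M t)⁻¹ *ᵥ (g : Fin r → ℝ)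
    let p : Fin r → ℝ := mxy t *ᵥ (y' t : Fin n → ℝ)
    let w : Fin r → ℝ := (M t)⁻¹ *ᵥ p
    let v : EuclideanSpace ℝ (Fin r) := WithLp.toLp 2 (fun α => -(u α) - w α : Fin r → ℝ)
    have hxv : HasDerivAt x v t := by
      set e := EuclideanSpace.equiv (Fin r) ℝ with he
      have h1 : HasDerivAt (fun s => e (x s)) (e v) t := by
        refine hasDerivAt_pi.2 fun α => ?_
        exact hode α t ht
      have h2 := ((e.symm : (Fin r → ℝ) →L[ℝ]
        EuclideanSpace ℝ (Fin r)).hasFDerivAt).comp_hasDerivAt t h1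
      simp only [Function.comp_def, ContinuousLinearEquiv.coe_coe,
        ContinuousLinearEquiv.symm_apply_apply] at h2
      exact h2
    have hfd : HasFDerivAt U (fderiv ℝ U (x t)) (x t) :=
      (hU.differentiable one_ne_zero (x t)).hasFDerivAt
    have hV : HasDerivAt (fun s => U (x s)) (fderiv ℝ U (x t) v) t :=
      hfd.comp_hasDerivAt t hxv
    refine ⟨_, hV, fun hG => ?_⟩
    have hval : fderiv ℝ U (x t) v = ⟪g, v⟫ := by rw [hg, gradient]; simp
    have hveq : (v : Fin r → ℝ) = -u - w := rfl
    have hsplit : ⟪g, v⟫ = -((g : Fin r → ℝ) ⬝ᵥ u) - ((g : Fin r → ℝ) ⬝ᵥ w) := by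
      rw [aux_inner_dot, hveq, dotProduct_sub, dotProduct_neg]
    rw [hval, hsplit]
    refine aux_step hc₁ hc₂ hC0 hMT (hMpd t).posSemidef
      (fun z => aux_quad_lo (hMlo t ht) z) (fun z => aux_quad_hi (hMhi t ht) z)
      g (WithLp.toLp 2 u) (WithLp.toLp 2 p) (WithLp.toLp 2 w) ?_ ?_ ?_ ?_
    · show (M t) *ᵥ ((M t)⁻¹ *ᵥ (g : Fin r → ℝ)) = (g : Fin r → ℝ)
      rw [Matrix.mulVec_mulVec, Matrix.mul_nonsing_inv _ hMdet, Matrix.one_mulVec]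
    · show (M t) *ᵥ ((M t)⁻¹ *ᵥ p) = p
      rw [Matrix.mulVec_mulVec, Matrix.mul_nonsing_inv _ hMdet, Matrix.one_mulVec]
    · refine aux_norm_le (k := r) (WithLp.toLp 2 p) (a := (n : ℝ) * (c₃ * c₄)) (by positivity) ?_
      intro β
      show |p β| ≤ (n : ℝ) * (c₃ * c₄)
      have hpβ : p β = ∑ a, mxy t β a * y' t a := rfl
      rw [hpβ]
      calc |∑ a, mxy t β a * y' t a| ≤ ∑ a, |mxy t β a * y' t a| :=
            Finset.abs_sum_le_sum_abs _ _
        _ ≤ ∑ _a : Fin n, c₃ * c₄ := by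
            refine Finset.sum_le_sum fun a _ => ?_
            rw [abs_mul]
            have e1 : |mxy t β a| ≤ c₃ :=
              le_trans ((mxy t).norm_entry_le_entrywise_sup_norm (i := β) (j := a)) (hmxy t ht)
            have e2 : |y' t a| ≤ c₄ := le_trans (aux_coord (y' t) a) (hy' t ht)
            exact mul_le_mul e1 e2 (abs_nonneg _) hc₃.le
        _ = (n : ℝ) * (c₃ * c₄) := by
            rw [Finset.sum_const, Finset.card_univ, Fintype.card_fin, nsmul_eq_mul]
    · rw [← hG₀]; exact hG
  -- choose the radius where the gradient is large
  obtain ⟨S₁, hS₁⟩ := hgradcoer G₀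
  set S₁' : ℝ := max S₁ 0 with hS₁'
  obtain ⟨z₀, hz₀mem, hz₀max⟩ :=
    (isCompact_closedBall (0 : EuclideanSpace ℝ (Fin r)) S₁').exists_isMaxOn
      ⟨0, Metric.mem_closedBall_self (le_max_right _ _)⟩ hU.continuous.continuousOn
  set B : ℝ := max (U z₀) (U (x 0)) with hB
  have hball : ∀ z : EuclideanSpace ℝ (Fin r), ‖z‖ ≤ S₁' → U z ≤ B := by
    intro z hz
    refine le_trans (hz₀max ?_) (le_max_left _ _)
    simpa [Metric.mem_closedBall, dist_zero_right] using hz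
  -- the Lyapunov bound
  have hclaim : ∀ t, 0 ≤ t → U (x t) ≤ B := by
    intro t₁ ht₁
    by_contra hcon
    push_neg at hcon
    set Vext : ℝ → ℝ := fun s => U (x (max s 0)) with hVext
    have hVc : Continuous Vext := by
      rw [continuous_iff_continuousAt]
      intro s
      have h1 : ContinuousAt (fun s => U (x s)) (max s 0) :=
        ((hkey (max s 0) (le_max_right s 0)).choose_spec.1).continuousAt
      exact ContinuousAt.comp (f := fun s : ℝ => max s 0) (g := fun s => U (x s)) h1
        ((continuous_id.max continuous_const).continuousAt)
    set A : Set ℝ := Set.Icc 0 t₁ ∩ Vext ⁻¹' Set.Iic B with hA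
    have hAcl : IsClosed A := isClosed_Icc.inter (IsClosed.preimage hVc isClosed_Iic)
    have h0A : (0 : ℝ) ∈ A := by
      constructor
      · exact ⟨le_refl 0, ht₁⟩
      · show Vext 0 ≤ B
        have : Vext 0 = U (x 0) := by simp [hVext]
        rw [this, hB]
        exact le_max_right _ _
    have hAbdd : BddAbove A := ⟨t₁, fun s hs => hs.1.2⟩
    set t₀ : ℝ := sSup A with ht₀
    have ht₀A : t₀ ∈ A := hAcl.csSup_mem ⟨0, h0A⟩ hAbdd
    have ht₀0 : 0 ≤ t₀ := ht₀A.1.1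
    have ht₀t₁ : t₀ ≤ t₁ := ht₀A.1.2
    have hVt₀ : U (x t₀) ≤ B := by
      have := ht₀A.2
      simpa [hVext, max_eq_left ht₀0] using this
    have ht₀lt : t₀ < t₁ := by
      rcases lt_or_eq_of_le ht₀t₁ with h | h
      · exact h
      · rw [h] at hVt₀; linarith
    have hmid : ∀ s, s ∈ Set.Ioc t₀ t₁ → B < U (x s) := by
      intro s hs
      by_contra h
      push_neg at h
      have hs0 : 0 ≤ s := le_trans ht₀0 hs.1.le
      have hsA : s ∈ A := by
        refine ⟨⟨hs0, hs.2⟩, ?_⟩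
        show Vext s ≤ B
        rw [hVext]
        simpa [max_eq_left hs0] using h
      have := le_csSup hAbdd hsA
      exact absurd this (not_le.mpr hs.1)
    have hmono : AntitoneOn (fun s => U (x s)) (Set.Icc t₀ t₁) := by
      apply antitoneOn_of_deriv_nonpos (convex_Icc _ _)
      · intro s hs
        exact ((hkey s (le_trans ht₀0 hs.1)).choose_spec.1).continuousAt.continuousWithinAt
      · rw [interior_Icc]
        intro s hs
        exact ((hkey s (le_trans ht₀0 hs.1.le)).choose_spec.1).differentiableAt.differentiableWithinAt
      · rw [interior_Icc]
        intro s hs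
        have hs0 : 0 ≤ s := le_trans ht₀0 hs.1.le
        obtain ⟨d, hd, hsign⟩ := hkey s hs0
        rw [hd.deriv]
        apply hsign
        have hBs : B < U (x s) := hmid s ⟨hs.1, hs.2.le⟩
        have hxs : S₁' < ‖x s‖ := by
          by_contra hle
          push_neg at hle
          exact absurd (hball (x s) hle) (not_le.mpr hBs)
        exact hS₁ (x s) (le_trans (le_trans (le_max_left _ _) hxs.le) le_rfl)
      -- done
    have hfin : U (x t₁) ≤ U (x t₀) :=
      hmono ⟨le_refl t₀, ht₀t₁⟩ ⟨ht₀t₁, le_refl t₁⟩ ht₀t₁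
    linarith
  obtain ⟨S₂, hS₂⟩ := hUcoer (B + 1)
  refine ⟨max S₂ 0, fun t ht => ?_⟩
  by_contra hcon
  push_neg at hcon
  have h9 : S₂ ≤ ‖x t‖ := le_trans (le_max_left _ _) hcon.le
  have h10 := hS₂ (x t) h9
  have h11 := hclaim t ht
  linarith
end
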